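/- Let C be a braided monoidal category with braiding β and A a commutative monoid object, with F(V) = A ⊗ V the free A-module on V. For any V, W in C, the morphism f̄ : F(V ⊗ W) ⟶ F(V) ⊗_A F(W) given by composing id_A ⊗ id_V ⊗ ι ⊗ id_W : A ⊗ V ⊗ W ⟶ (A ⊗ V) ⊗ (A ⊗ W) with the projection π, and the morphism ḡ : F(V) ⊗_A F(W) ⟶ F(V ⊗ W) induced on the coequalizer by (μ ⊗ id_V ⊗ id_W) ∘ (id_A ⊗ β_{A,V}⁻¹ ⊗ id_W) : (A ⊗ V) ⊗ (A ⊗ W) ⟶ A ⊗ V ⊗ W, are well defined mutually inverse isomorphisms of A-modules. Hence the free functor F is a tensor functor from C to (Mod A, ⊗_A). -/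

import Mathlib

/-!
`ḡ ∘ f̄ = id` is the unit law, since braiding the unit past `V` does nothing, and `ḡ` coequalizes
the two actions because `A` is commutative. As `π` is epi, `f̄ ∘ ḡ = id` reduces to
`f̄ ∘ ḡ ∘ π = π`. Write `f̄ = π ∘ f` and `ḡ ∘ π = g` with `f`, `g` morphisms of `C`. The map
`s : a v ⊗ b w ↦ b ⊗ a v ⊗ 1 w` satisfies `μ₂ ∘ s = id` and, by commutativity, `μ₁ ∘ s = f ∘ g`,
so `π = π ∘ μ₂ ∘ s = π ∘ μ₁ ∘ s = f̄ ∘ ḡ ∘ π`.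
The `A`-action on `F(V) ⊗_A F(W)` is transported from `F(V ⊗ W)` along `ḡ`; it is the one
descended from the first factor because `g` is `A`-linear in that factor.
-/

open CategoryTheory MonoidalCategory Limits

universe v u

variable {C : Type u} [Category.{v} C] [MonoidalCategory C] [BraidedCategory C]

/-- The free module `F(V) = A ⊗ V` over a monoid object `A`, with action `μ ⊗ id_V`. -/
@[simps]
def freeMod (A : Mon C) (V : C) : Mod C A.X where
  X := A.X ⊗ V
  mod := {
  smul := (α_ A.X A.X V).inv ≫ (MonObj.mul (X := A.X) ▷ V)
  one_smul := by
    change (MonObj.one (X := A.X) ▷ (A.X ⊗ V)) ≫ (α_ A.X A.X V).inv ≫ (MonObj.mul (X := A.X) ▷ V)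
      = (λ_ (A.X ⊗ V)).hom
    rw [associator_inv_naturality_left_assoc, ← comp_whiskerRight, MonObj.one_mul]
    monoidal
  mul_smul := by
    change (MonObj.mul (X := A.X) ▷ (A.X ⊗ V)) ≫ (α_ A.X A.X V).inv ≫ (MonObj.mul (X := A.X) ▷ V)
      = (α_ A.X A.X (A.X ⊗ V)).hom ≫ (A.X ◁ ((α_ A.X A.X V).inv ≫ (MonObj.mul (X := A.X) ▷ V)))
        ≫ (α_ A.X A.X V).inv ≫ (MonObj.mul (X := A.X) ▷ V)
    simp only [MonoidalCategory.whiskerLeft_comp]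
    slice_rhs 3 4 => rw [associator_inv_naturality_middle]
    rw [associator_inv_naturality_left_assoc, ← comp_whiskerRight, MonObj.mul_assoc]
    simp only [comp_whiskerRight, Category.assoc]
    monoidal }

/-- The first of the two morphisms whose coequalizer is `X ⊗_A Y`, namely `μ_X ⊗ id_Y`. -/
def mapOne {A : Mon C} (X Y : Mod C A.X) : (A.X ⊗ X.X) ⊗ Y.X ⟶ X.X ⊗ Y.X :=
  (ModObj.smul (M := A.X) (X := X.X) : A.X ⊗ X.X ⟶ X.X) ▷ Y.X

/-- The second of the two morphisms whose coequalizer is `X ⊗_A Y`, namely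
`(id_X ⊗ μ_Y) ∘ (β_{A,X} ⊗ id_Y)`. -/
def mapTwo {A : Mon C} (X Y : Mod C A.X) : (A.X ⊗ X.X) ⊗ Y.X ⟶ X.X ⊗ Y.X :=
  ((β_ A.X X.X).hom ▷ Y.X) ≫ (α_ X.X A.X Y.X).hom ≫ (X.X ◁ (ModObj.smul (M := A.X) (X := Y.X) : A.X ⊗ Y.X ⟶ Y.X))

variable [HasCoequalizers C]

/-- The underlying object of `X ⊗_A Y`: the coequalizer of `mapOne` and `mapTwo`. -/
noncomputable def tensorQ {A : Mon C} (X Y : Mod C A.X) : C :=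
  coequalizer (mapOne X Y) (mapTwo X Y)

/-- The canonical projection `π_{X,Y} : X ⊗ Y ⟶ X ⊗_A Y`. -/
noncomputable def tensorπ {A : Mon C} (X Y : Mod C A.X) : X.X ⊗ Y.X ⟶ tensorQ X Y :=
  coequalizer.π _ _

/-- The morphism `id_A ⊗ id_V ⊗ ι ⊗ id_W : A ⊗ V ⊗ W ⟶ (A ⊗ V) ⊗ (A ⊗ W)`. -/
def fbarC (A : Mon C) (V W : C) : A.X ⊗ (V ⊗ W) ⟶ (A.X ⊗ V) ⊗ (A.X ⊗ W) :=
  (A.X ◁ (V ◁ (λ_ W).inv)) ≫ (A.X ◁ (V ◁ (MonObj.one (X := A.X) ▷ W))) ≫ (α_ A.X V (A.X ⊗ W)).inv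

/-- The morphism `(μ ⊗ id_V ⊗ id_W) ∘ (id_A ⊗ β_{A,V}⁻¹ ⊗ id_W) :
`(A ⊗ V) ⊗ (A ⊗ W) ⟶ A ⊗ V ⊗ W`. -/
def gbarC (A : Mon C) (V W : C) : (A.X ⊗ V) ⊗ (A.X ⊗ W) ⟶ A.X ⊗ (V ⊗ W) :=
  (α_ A.X V (A.X ⊗ W)).hom ≫ (A.X ◁ (α_ V A.X W).inv) ≫ (A.X ◁ ((β_ A.X V).inv ▷ W)) ≫
    (A.X ◁ (α_ A.X V W).hom) ≫ (α_ A.X A.X (V ⊗ W)).inv ≫ (MonObj.mul (X := A.X) ▷ (V ⊗ W))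

open BraidedCategory
open scoped MonObj

section FreeModule

variable {C : Type*} [Category C] [MonoidalCategory C] (A : Mon C) (V W : C)

lemma freeMod_smul : γ[A.X, (freeMod A V).X] = (α_ A.X A.X V).inv ≫ μ ▷ V := rfl

lemma whiskerLeft_unit_mul : A.X ◁ ((λ_ V).inv ≫ η ▷ V) ≫ (α_ A.X A.X V).inv ≫ μ ▷ V = 𝟙 _ := by
  rw [MonoidalCategory.whiskerLeft_comp, Category.assoc, associator_inv_naturality_middle_assoc,
    ← comp_whiskerRight, MonObj.mul_one]
  monoidal

variable [BraidedCategory C]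

lemma fbarC_gbarC : fbarC A V W ≫ gbarC A V W = 𝟙 _ := by
  have unit_past_V : V ◁ ((λ_ W).inv ≫ η ▷ W) ≫ (α_ V A.X W).inv ≫ (β_ A.X V).inv ▷ W ≫
      (α_ A.X V W).hom = (λ_ (V ⊗ W)).inv ≫ η ▷ (V ⊗ W) := by
    rw [MonoidalCategory.whiskerLeft_comp, Category.assoc,
      associator_inv_naturality_middle_assoc, ← comp_whiskerRight_assoc,
      braiding_inv_naturality_right, comp_whiskerRight_assoc, associator_naturality_left,
      braiding_inv_tensorUnit_left]
    monoidal
  simp only [fbarC, gbarC, Category.assoc, Iso.inv_hom_id_assoc,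
    ← MonoidalCategory.whiskerLeft_comp, ← MonoidalCategory.whiskerLeft_comp_assoc, unit_past_V,
    whiskerLeft_unit_mul]

lemma whiskerLeft_gbarC_smul :
    A.X ◁ gbarC A V W ≫ γ[A.X, (freeMod A (V ⊗ W)).X]
      = (α_ A.X (A.X ⊗ V) (A.X ⊗ W)).inv ≫ mapOne (freeMod A V) (freeMod A W) ≫ gbarC A V W := by
  rw [mapOne, freeMod_smul, freeMod_smul]
  dsimp only [freeMod]
  simp only [gbarC, MonoidalCategory.whiskerLeft_comp, comp_whiskerRight, Category.assoc]
  rw [associator_inv_naturality_middle_assoc]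
  slice_rhs 3 4 => rw [associator_naturality_left]
  slice_rhs 4 5 => rw [← whisker_exchange]
  slice_rhs 5 6 => rw [← whisker_exchange]
  slice_rhs 6 7 => rw [← whisker_exchange]
  slice_rhs 7 8 => rw [associator_inv_naturality_left]
  slice_rhs 8 9 => rw [← comp_whiskerRight, MonObj.mul_assoc]
  simp only [comp_whiskerRight]
  monoidal

def scalarToFront : (A.X ⊗ V) ⊗ (A.X ⊗ W) ⟶ (A.X ⊗ (A.X ⊗ V)) ⊗ (A.X ⊗ W) :=
  (A.X ⊗ V) ◁ A.X ◁ ((λ_ W).inv ≫ η ▷ W) ≫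
    (α_ (A.X ⊗ V) A.X (A.X ⊗ W)).inv ≫ (β_ A.X (A.X ⊗ V)).inv ▷ (A.X ⊗ W)

lemma scalarToFront_mapTwo : scalarToFront A V W ≫ mapTwo (freeMod A V) (freeMod A W) = 𝟙 _ := by
  rw [mapTwo, freeMod_smul]
  dsimp only [freeMod]
  simp only [scalarToFront, Category.assoc, Iso.inv_hom_id_assoc,
    ← comp_whiskerRight_assoc, Iso.inv_hom_id, id_whiskerRight, Category.id_comp,
    ← MonoidalCategory.whiskerLeft_comp, whiskerLeft_unit_mul, MonoidalCategory.whiskerLeft_id]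

variable [IsCommMonObj A.X]

lemma mapOne_gbarC_eq_mapTwo_gbarC :
    mapOne (freeMod A V) (freeMod A W) ≫ gbarC A V W
      = mapTwo (freeMod A V) (freeMod A W) ≫ gbarC A V W := by
  rw [mapOne, mapTwo, freeMod_smul, freeMod_smul]
  dsimp only [freeMod]
  simp only [gbarC]
  -- After cancelling the braiding of `mapTwo`, the two scalars meet as `β⁻¹ ≫ μ = μ`.
  rw [← cancel_epi ((β_ A.X (A.X ⊗ V)).inv ▷ (A.X ⊗ W))]
  simp only [Category.assoc]
  conv_rhs => rw [← comp_whiskerRight_assoc, Iso.inv_hom_id, id_whiskerRight, Category.id_comp]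
  conv_lhs => rw [braiding_tensor_right_inv]
  simp only [MonoidalCategory.whiskerLeft_comp, comp_whiskerRight, Category.assoc]
  slice_lhs 5 6 => rw [← comp_whiskerRight, Iso.hom_inv_id]
  simp only [id_whiskerRight, Category.id_comp, Category.assoc]
  slice_lhs 4 5 => rw [← comp_whiskerRight, ← comp_whiskerRight, IsCommMonObj.mul_comm']
  slice_lhs 4 5 => rw [associator_naturality_left]
  slice_lhs 5 6 => rw [← whisker_exchange]
  slice_lhs 6 7 => rw [← whisker_exchange]
  slice_lhs 7 8 => rw [← whisker_exchange]
  slice_lhs 8 9 => rw [associator_inv_naturality_left]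
  slice_rhs 3 4 => rw [associator_naturality_right]
  slice_rhs 4 5 => rw [← MonoidalCategory.whiskerLeft_comp, associator_inv_naturality_middle,
    MonoidalCategory.whiskerLeft_comp]
  slice_rhs 5 6 => rw [← MonoidalCategory.whiskerLeft_comp, ← comp_whiskerRight,
    braiding_inv_naturality_right, comp_whiskerRight, MonoidalCategory.whiskerLeft_comp]
  slice_rhs 6 7 => rw [← MonoidalCategory.whiskerLeft_comp, associator_naturality_left,
    MonoidalCategory.whiskerLeft_comp]
  slice_rhs 7 8 => rw [associator_inv_naturality_middle]
  slice_rhs 8 9 => rw [← comp_whiskerRight, MonObj.mul_assoc_flip]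
  simp only [braiding_tensor_left_inv, MonoidalCategory.whiskerLeft_comp, comp_whiskerRight,
    Category.assoc]
  monoidal

lemma scalarToFront_mapOne :
    scalarToFront A V W ≫ mapOne (freeMod A V) (freeMod A W) = gbarC A V W ≫ fbarC A V W := by
  rw [mapOne, freeMod_smul]
  dsimp only [freeMod]
  simp only [scalarToFront, gbarC, fbarC, MonoidalCategory.whiskerLeft_comp,
    comp_whiskerRight, Category.assoc, braiding_tensor_right_inv]
  slice_lhs 8 9 => rw [← comp_whiskerRight, Iso.hom_inv_id]
  simp only [id_whiskerRight, Category.id_comp]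
  slice_lhs 7 8 => rw [← comp_whiskerRight, ← comp_whiskerRight, IsCommMonObj.mul_comm']
  slice_lhs 2 3 => rw [associator_inv_naturality_right]
  slice_lhs 3 4 => rw [whisker_exchange]
  slice_lhs 4 5 => rw [whisker_exchange]
  slice_lhs 5 6 => rw [whisker_exchange]
  slice_lhs 6 7 => rw [whisker_exchange]
  monoidal

end FreeModule

lemma tensorπ_condition {A : Mon C} (X Y : Mod C A.X) :
    mapOne X Y ≫ tensorπ X Y = mapTwo X Y ≫ tensorπ X Y :=
  coequalizer.condition _ _

lemma tensorπ_hom_ext {A : Mon C} {X Y : Mod C A.X} {Z : C} {f g : tensorQ X Y ⟶ Z}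
    (h : tensorπ X Y ≫ f = tensorπ X Y ≫ g) : f = g :=
  coequalizer.hom_ext h

section RelativeTensor

variable (A : Mon C) (V W : C)

noncomputable def fbar : A.X ⊗ (V ⊗ W) ⟶ tensorQ (freeMod A V) (freeMod A W) :=
  fbarC A V W ≫ tensorπ (freeMod A V) (freeMod A W)

variable [IsCommMonObj A.X]

noncomputable def gbar : tensorQ (freeMod A V) (freeMod A W) ⟶ A.X ⊗ (V ⊗ W) :=
  coequalizer.desc (gbarC A V W) (mapOne_gbarC_eq_mapTwo_gbarC A V W)

lemma tensorπ_gbar : tensorπ (freeMod A V) (freeMod A W) ≫ gbar A V W = gbarC A V W :=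
  coequalizer.π_desc _ _

-- `erw`: the codomain of `fbarC` is `(freeMod A V).X ⊗ (freeMod A W).X` only up to unfolding
-- `freeMod`.
lemma fbar_gbar : fbar A V W ≫ gbar A V W = 𝟙 _ := by
  erw [fbar, Category.assoc, tensorπ_gbar, fbarC_gbarC]

lemma gbarC_fbar : gbarC A V W ≫ fbar A V W = tensorπ (freeMod A V) (freeMod A W) := by
  erw [fbar, ← Category.assoc, ← scalarToFront_mapOne, Category.assoc, tensorπ_condition,
    ← Category.assoc, scalarToFront_mapTwo, Category.id_comp]

lemma gbar_fbar : gbar A V W ≫ fbar A V W = 𝟙 _ :=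
  tensorπ_hom_ext (by erw [← Category.assoc, tensorπ_gbar, gbarC_fbar, Category.comp_id])

noncomputable def tensorQSmul :
    A.X ⊗ tensorQ (freeMod A V) (freeMod A W) ⟶ tensorQ (freeMod A V) (freeMod A W) :=
  A.X ◁ gbar A V W ≫ γ[A.X, (freeMod A (V ⊗ W)).X] ≫ fbar A V W

lemma whiskerLeft_tensorπ_tensorQSmul :
    A.X ◁ tensorπ (freeMod A V) (freeMod A W) ≫ tensorQSmul A V W
      = (α_ A.X (A.X ⊗ V) (A.X ⊗ W)).inv ≫ mapOne (freeMod A V) (freeMod A W)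
          ≫ tensorπ (freeMod A V) (freeMod A W) := by
  erw [tensorQSmul, ← MonoidalCategory.whiskerLeft_comp_assoc, tensorπ_gbar,
    ← Category.assoc, whiskerLeft_gbarC_smul, Category.assoc, Category.assoc, gbarC_fbar]
  rfl

lemma smul_fbar :
    γ[A.X, (freeMod A (V ⊗ W)).X] ≫ fbar A V W = A.X ◁ fbar A V W ≫ tensorQSmul A V W := by
  rw [tensorQSmul, ← MonoidalCategory.whiskerLeft_comp_assoc, fbar_gbar,
    MonoidalCategory.whiskerLeft_id, Category.id_comp]
  rfl

end RelativeTensor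

theorem free_is_tensor_functor
    (A : Mon C) (hcomm : (β_ A.X A.X).hom ≫ MonObj.mul (X := A.X) = MonObj.mul (X := A.X)) (V W : C) :
    ∃ h : mapOne (freeMod A V) (freeMod A W) ≫ gbarC A V W
        = mapTwo (freeMod A V) (freeMod A W) ≫ gbarC A V W,
      ∃ actQ : A.X ⊗ tensorQ (freeMod A V) (freeMod A W) ⟶ tensorQ (freeMod A V) (freeMod A W),
        -- `actQ` is the action of `A` on `F(V) ⊗_A F(W)` descended from the first factor
        ((A.X ◁ tensorπ (freeMod A V) (freeMod A W)) ≫ actQ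
            = (α_ A.X (A.X ⊗ V) (A.X ⊗ W)).inv ≫ ((ModObj.smul (M := A.X) (X := (freeMod A V).X) : A.X ⊗ (freeMod A V).X ⟶ (freeMod A V).X) ▷ (A.X ⊗ W))
                ≫ tensorπ (freeMod A V) (freeMod A W)) ∧
        -- `f̄` and `ḡ` are mutually inverse ...
        ((fbarC A V W ≫ tensorπ (freeMod A V) (freeMod A W)) ≫ coequalizer.desc (gbarC A V W) h
            = 𝟙 (A.X ⊗ (V ⊗ W))) ∧
        (coequalizer.desc (gbarC A V W) h ≫ (fbarC A V W ≫ tensorπ (freeMod A V) (freeMod A W))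
            = 𝟙 (tensorQ (freeMod A V) (freeMod A W))) ∧
        -- ... isomorphisms of `A`-modules
        ((ModObj.smul (M := A.X) (X := (freeMod A (V ⊗ W)).X) : A.X ⊗ (freeMod A (V ⊗ W)).X ⟶ (freeMod A (V ⊗ W)).X) ≫ (fbarC A V W ≫ tensorπ (freeMod A V) (freeMod A W))
            = (A.X ◁ (fbarC A V W ≫ tensorπ (freeMod A V) (freeMod A W))) ≫ actQ) := by
  have : IsCommMonObj A.X := ⟨hcomm⟩
  exact ⟨mapOne_gbarC_eq_mapTwo_gbarC A V W, tensorQSmul A V W,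
    whiskerLeft_tensorπ_tensorQSmul A V W, fbar_gbar A V W, gbar_fbar A V W, smul_fbar A V W⟩
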